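/- With the same hypotheses, the matching lower bound holds: O_k(f, D_𝐰) ≥ Σ_{w'∈Σ} s̲_{𝐰w'} · O_{k-1}(f, D_{σ(𝐰)w'}) − β N^{k-n}, where s̲_𝐯 = inf_{D_𝐯}|S| and β = √2(2λ_S M_f + λ_q)|I|. -/

import Mathlib

open scoped BigOperators

noncomputable def oscil (φ : ℝ × ℝ → ℝ) (E : Set (ℝ × ℝ)) : ℝ :=
  sSup ((fun p : (ℝ × ℝ) × (ℝ × ℝ) => φ p.1 - φ p.2) '' (E ×ˢ E))

noncomputable def eudist (s t : ℝ × ℝ) : ℝ :=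
  Real.sqrt ((s.1 - t.1) ^ 2 + (s.2 - t.2) ^ 2)

noncomputable def uMap (x0 len : ℝ) (N : ℕ) (i : Fin N) (x : ℝ) : ℝ :=
  if i.val % 2 = 0 then x0 + i.val * (len / N) + (x - x0) / N
  else x0 + (i.val + 1) * (len / N) - (x - x0) / N

noncomputable def uInv (x0 len : ℝ) (N : ℕ) (i : Fin N) (y : ℝ) : ℝ :=
  if i.val % 2 = 0 then x0 + N * (y - (x0 + i.val * (len / N)))
  else x0 + N * ((x0 + (i.val + 1) * (len / N)) - y)

noncomputable def Lmap (x0 y0 len : ℝ) (N : ℕ) (w : Fin N × Fin N) (t : ℝ × ℝ) : ℝ × ℝ :=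
  (uMap x0 len N w.1 t.1, uMap y0 len N w.2 t.2)

noncomputable def LInv (x0 y0 len : ℝ) (N : ℕ) (w : Fin N × Fin N) (t : ℝ × ℝ) : ℝ × ℝ :=
  (uInv x0 len N w.1 t.1, uInv y0 len N w.2 t.2)

noncomputable def sqD (x0 y0 len : ℝ) : Set (ℝ × ℝ) :=
  Set.Icc x0 (x0 + len) ×ˢ Set.Icc y0 (y0 + len)

noncomputable def cell (x0 y0 len : ℝ) (N : ℕ) : List (Fin N × Fin N) → Set (ℝ × ℝ)
  | [] => sqD x0 y0 len
  | w :: ws => Lmap x0 y0 len N w '' cell x0 y0 len N ws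

noncomputable def oscSum (x0 y0 len : ℝ) (N : ℕ) (φ : ℝ × ℝ → ℝ)
    (p : List (Fin N × Fin N)) (k : ℕ) : ℝ :=
  ∑ w : Fin k → Fin N × Fin N, oscil φ (cell x0 y0 len N (p ++ List.ofFn w))

noncomputable def supAbs (S : ℝ × ℝ → ℝ) (E : Set (ℝ × ℝ)) : ℝ :=
  sSup ((fun t => |S t|) '' E)

noncomputable def infAbs (S : ℝ × ℝ → ℝ) (E : Set (ℝ × ℝ)) : ℝ :=
  sInf ((fun t => |S t|) '' E)
section Aux
variable (x0 y0 len : ℝ) (N : ℕ)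

lemma uMap_dist (i : Fin N) (x y : ℝ) :
    |uMap x0 len N i x - uMap x0 len N i y| = |x - y| / N := by
  unfold uMap; split_ifs with h
  · rw [show (x0 + i.val * (len / N) + (x - x0) / N) - (x0 + i.val * (len / N) + (y - x0) / N)
      = (x - y) / N by ring, abs_div, Nat.abs_cast]
  · rw [show (x0 + (i.val + 1) * (len / N) - (x - x0) / N) - (x0 + (i.val + 1) * (len / N) - (y - x0) / N)
      = -((x - y) / N) by ring, abs_neg, abs_div, Nat.abs_cast]

lemma uMap_mem (hlen : 0 ≤ len) (i : Fin N) {x : ℝ} (hx : x ∈ Set.Icc x0 (x0 + len)) :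
    uMap x0 len N i x ∈ Set.Icc x0 (x0 + len) := by
  have hN : (0:ℝ) < N := by exact_mod_cast i.pos
  obtain ⟨h1, h2⟩ := hx
  have hiN : (i.val : ℝ) + 1 ≤ N := by exact_mod_cast i.isLt
  have hi0 : (0:ℝ) ≤ i.val := by positivity
  have hd0 : (0:ℝ) ≤ (x - x0) / N := div_nonneg (by linarith) hN.le
  have hd1 : (x - x0) / N ≤ len / N := by gcongr; linarith
  have hl0 : (0:ℝ) ≤ len / N := div_nonneg hlen hN.le
  have key : (i.val : ℝ) * (len / N) + len / N ≤ len := by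
    have : ((i.val : ℝ) + 1) * (len / N) ≤ N * (len / N) := by gcongr
    rw [mul_div_cancel₀ _ hN.ne'] at this
    linarith
  unfold uMap; split_ifs with h <;> constructor <;> nlinarith [mul_nonneg hi0 hl0]

lemma uInv_uMap (i : Fin N) (x : ℝ) : uInv x0 len N i (uMap x0 len N i x) = x := by
  have hN : (0:ℝ) ≠ N := by exact_mod_cast i.pos.ne
  unfold uInv uMap; split_ifs with h <;> field_simp <;> ring

end Aux
section Aux2
variable (x0 y0 len : ℝ) (N : ℕ)

lemma Lmap_mem_sqD (hlen : 0 ≤ len) (w : Fin N × Fin N) {t : ℝ × ℝ} (ht : t ∈ sqD x0 y0 len) :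
    Lmap x0 y0 len N w t ∈ sqD x0 y0 len :=
  ⟨uMap_mem x0 len N hlen w.1 ht.1, uMap_mem y0 len N hlen w.2 ht.2⟩

lemma LInv_Lmap (w : Fin N × Fin N) (t : ℝ × ℝ) :
    LInv x0 y0 len N w (Lmap x0 y0 len N w t) = t := by
  unfold LInv Lmap
  simp [uInv_uMap]

lemma cell_subset_sqD (hlen : 0 ≤ len) : ∀ l : List (Fin N × Fin N),
    cell x0 y0 len N l ⊆ sqD x0 y0 len
  | [] => subset_rfl
  | w :: ws => by
      intro t ht
      obtain ⟨s, hs, rfl⟩ := ht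
      exact Lmap_mem_sqD x0 y0 len N hlen w (cell_subset_sqD hlen ws hs)

lemma sqD_nonempty (hlen : 0 ≤ len) : (sqD x0 y0 len).Nonempty :=
  ⟨(x0, y0), ⟨le_refl _, by linarith⟩, ⟨le_refl _, by linarith⟩⟩

lemma cell_nonempty (hlen : 0 ≤ len) : ∀ l : List (Fin N × Fin N),
    (cell x0 y0 len N l).Nonempty
  | [] => sqD_nonempty x0 y0 len hlen
  | w :: ws => (cell_nonempty hlen ws).image _

lemma continuous_uMap (i : Fin N) : Continuous (uMap x0 len N i) := by
  unfold uMap; split_ifs <;> fun_prop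

lemma continuous_Lmap (w : Fin N × Fin N) : Continuous (Lmap x0 y0 len N w) := by
  unfold Lmap
  exact ((continuous_uMap x0 len N w.1).comp continuous_fst).prodMk
    ((continuous_uMap y0 len N w.2).comp continuous_snd)

lemma cell_isCompact : ∀ l : List (Fin N × Fin N), IsCompact (cell x0 y0 len N l)
  | [] => (isCompact_Icc).prod isCompact_Icc
  | w :: ws => (cell_isCompact ws).image (continuous_Lmap x0 y0 len N w)

lemma cell_append_subset (hlen : 0 ≤ len) : ∀ (a b : List (Fin N × Fin N)),
    cell x0 y0 len N (a ++ b) ⊆ cell x0 y0 len N a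
  | [], b => cell_subset_sqD x0 y0 len N hlen b
  | w :: ws, b => Set.image_mono (cell_append_subset hlen ws b)

lemma cell_pair_bound (hlen : 0 ≤ len) : ∀ (l : List (Fin N × Fin N)),
    ∀ t₁ ∈ cell x0 y0 len N l, ∀ t₂ ∈ cell x0 y0 len N l,
      |t₁.1 - t₂.1| ≤ len / N ^ l.length ∧ |t₁.2 - t₂.2| ≤ len / N ^ l.length
  | [] => by
      rintro ⟨a1, a2⟩ ⟨⟨h1, h2⟩, h3, h4⟩ ⟨b1, b2⟩ ⟨⟨h5, h6⟩, h7, h8⟩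
      simp only [List.length_nil, pow_zero, div_one] at *
      constructor <;> rw [abs_le] <;> constructor <;> simp at * <;> linarith
  | w :: ws => by
      rintro t₁ ⟨s₁, hs₁, rfl⟩ t₂ ⟨s₂, hs₂, rfl⟩
      obtain ⟨h1, h2⟩ := cell_pair_bound hlen ws s₁ hs₁ s₂ hs₂
      have hN : (0:ℝ) < N := by exact_mod_cast w.1.pos
      constructor
      · show |uMap x0 len N w.1 s₁.1 - uMap x0 len N w.1 s₂.1| ≤ _
        rw [uMap_dist, List.length_cons, pow_succ, ← div_div]
        gcongr
      · show |uMap y0 len N w.2 s₁.2 - uMap y0 len N w.2 s₂.2| ≤ _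
        rw [uMap_dist, List.length_cons, pow_succ, ← div_div]
        gcongr

lemma eudist_le {t₁ t₂ : ℝ × ℝ} {c : ℝ} (hc : 0 ≤ c)
    (h1 : |t₁.1 - t₂.1| ≤ c) (h2 : |t₁.2 - t₂.2| ≤ c) :
    eudist t₁ t₂ ≤ Real.sqrt 2 * c := by
  unfold eudist
  rw [show Real.sqrt 2 * c = Real.sqrt 2 * Real.sqrt (c ^ 2) by rw [Real.sqrt_sq hc],
    ← Real.sqrt_mul (by norm_num)]
  apply Real.sqrt_le_sqrt
  nlinarith [abs_nonneg (t₁.1 - t₂.1), abs_nonneg (t₁.2 - t₂.2), sq_abs (t₁.1 - t₂.1), sq_abs (t₁.2 - t₂.2)]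

lemma cell_eudist (hlen : 0 ≤ len) (l : List (Fin N × Fin N))
    {t₁ t₂ : ℝ × ℝ} (h1 : t₁ ∈ cell x0 y0 len N l) (h2 : t₂ ∈ cell x0 y0 len N l) :
    eudist t₁ t₂ ≤ Real.sqrt 2 * (len / N ^ l.length) := by
  obtain ⟨a, b⟩ := cell_pair_bound x0 y0 len N hlen l t₁ h1 t₂ h2
  exact eudist_le (by positivity) a b

end Aux2
section Aux3
variable {φ : ℝ × ℝ → ℝ} {E : Set (ℝ × ℝ)}

lemma bddAbove_oscSet (hE : IsCompact E) (hf : ContinuousOn φ E) :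
    BddAbove ((fun p : (ℝ × ℝ) × (ℝ × ℝ) => φ p.1 - φ p.2) '' (E ×ˢ E)) := by
  obtain ⟨M, hM⟩ := (hE.bddAbove_image hf)
  obtain ⟨m, hm⟩ := (hE.bddBelow_image hf)
  refine ⟨M - m, ?_⟩
  rintro x ⟨⟨a, b⟩, ⟨ha, hb⟩, rfl⟩
  have h1 : φ a ≤ M := hM ⟨a, ha, rfl⟩
  have h2 : m ≤ φ b := hm ⟨b, hb, rfl⟩
  simp only
  linarith

lemma sub_le_oscil (hE : IsCompact E) (hf : ContinuousOn φ E)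
    {a b : ℝ × ℝ} (ha : a ∈ E) (hb : b ∈ E) : φ a - φ b ≤ oscil φ E :=
  le_csSup (bddAbove_oscSet hE hf) ⟨(a, b), ⟨ha, hb⟩, rfl⟩

lemma oscil_nonneg (hE : IsCompact E) (hf : ContinuousOn φ E) (hne : E.Nonempty) :
    0 ≤ oscil φ E := by
  obtain ⟨t, ht⟩ := hne
  have := sub_le_oscil hE hf ht ht
  linarith

lemma abs_sub_le_oscil (hE : IsCompact E) (hf : ContinuousOn φ E)
    {a b : ℝ × ℝ} (ha : a ∈ E) (hb : b ∈ E) : |φ a - φ b| ≤ oscil φ E := by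
  rcases abs_cases (φ a - φ b) with ⟨h, _⟩ | ⟨h, _⟩ <;> rw [h]
  · exact sub_le_oscil hE hf ha hb
  · have := sub_le_oscil hE hf hb ha; linarith

lemma oscil_le (hne : E.Nonempty) {c : ℝ}
    (h : ∀ a ∈ E, ∀ b ∈ E, φ a - φ b ≤ c) : oscil φ E ≤ c := by
  apply csSup_le (hne.prod hne |>.image _)
  rintro x ⟨⟨a, b⟩, ⟨ha, hb⟩, rfl⟩
  exact h a ha b hb

lemma abs_le_supAbs {St : ℝ × ℝ → ℝ} (hE : IsCompact E) (hS : ContinuousOn St E)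
    {t : ℝ × ℝ} (ht : t ∈ E) : |St t| ≤ supAbs St E :=
  le_csSup (hE.bddAbove_image hS.abs) ⟨t, ht, rfl⟩

lemma supAbs_nonneg {St : ℝ × ℝ → ℝ} (hE : IsCompact E) (hS : ContinuousOn St E)
    (hne : E.Nonempty) : 0 ≤ supAbs St E := by
  obtain ⟨t, ht⟩ := hne
  exact le_trans (abs_nonneg _) (abs_le_supAbs hE hS ht)

lemma infAbs_nonneg {St : ℝ × ℝ → ℝ} (hne : E.Nonempty) : 0 ≤ infAbs St E := by
  apply le_csInf (hne.image _)
  rintro x ⟨t, ht, rfl⟩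
  exact abs_nonneg _

lemma infAbs_le {St : ℝ × ℝ → ℝ} {t : ℝ × ℝ} (ht : t ∈ E) : infAbs St E ≤ |St t| :=
  csInf_le ⟨0, by rintro x ⟨s, hs, rfl⟩; exact abs_nonneg _⟩ ⟨t, ht, rfl⟩

end Aux3
section Key
variable (x0 y0 len : ℝ) (N : ℕ)

lemma key_cell (hlen : 0 < len)
    (f S q : ℝ × ℝ → ℝ) (lamS lamq : ℝ) (hlamS : 0 ≤ lamS) (hlamq : 0 ≤ lamq)
    (hf : ContinuousOn f (sqD x0 y0 len))
    (hSlip : ∀ t₁ ∈ sqD x0 y0 len, ∀ t₂ ∈ sqD x0 y0 len, |S t₁ - S t₂| ≤ lamS * eudist t₁ t₂)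
    (hqlip : ∀ t₁ ∈ sqD x0 y0 len, ∀ t₂ ∈ sqD x0 y0 len, |q t₁ - q t₂| ≤ lamq * eudist t₁ t₂)
    (hself : ∀ w : Fin N × Fin N, ∀ t ∈ cell x0 y0 len N [w],
      f t = S t * f (LInv x0 y0 len N w t) + q t)
    (w0 : Fin N × Fin N) (l' : List (Fin N × Fin N)) (A : Set (ℝ × ℝ))
    (hEA : cell x0 y0 len N (w0 :: l') ⊆ A) :
    infAbs S A * oscil f (cell x0 y0 len N l') ≤
      oscil f (cell x0 y0 len N (w0 :: l')) +
        (lamS * supAbs f (sqD x0 y0 len) + lamq) *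
          (Real.sqrt 2 * (len / N ^ (l'.length + 1))) := by
  set E := cell x0 y0 len N (w0 :: l') with hE
  set E' := cell x0 y0 len N l' with hE'
  set M := supAbs f (sqD x0 y0 len) with hM
  set s := infAbs S A with hs
  set C := (lamS * M + lamq) * (Real.sqrt 2 * (len / N ^ (l'.length + 1))) with hC
  have hNpos : (0:ℝ) < N := by exact_mod_cast w0.1.pos
  have hcE : IsCompact E := cell_isCompact x0 y0 len N _
  have hcE' : IsCompact E' := cell_isCompact x0 y0 len N _
  have hneE : E.Nonempty := cell_nonempty x0 y0 len N hlen.le _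
  have hneE' : E'.Nonempty := cell_nonempty x0 y0 len N hlen.le _
  have hEsq : E ⊆ sqD x0 y0 len := cell_subset_sqD x0 y0 len N hlen.le _
  have hE'sq : E' ⊆ sqD x0 y0 len := cell_subset_sqD x0 y0 len N hlen.le _
  have hfE : ContinuousOn f E := hf.mono hEsq
  have hfE' : ContinuousOn f E' := hf.mono hE'sq
  have hcsq : IsCompact (sqD x0 y0 len) := isCompact_Icc.prod isCompact_Icc
  have hM0 : 0 ≤ M := supAbs_nonneg hcsq hf (sqD_nonempty x0 y0 len hlen.le)
  have hAne : A.Nonempty := hneE.mono hEA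
  have hs0 : 0 ≤ s := infAbs_nonneg hAne
  have hC0 : 0 ≤ C := by positivity
  have hosc0 : 0 ≤ oscil f E := oscil_nonneg hcE hfE hneE
  -- E is contained in cell [w0]
  have hE1 : E ⊆ cell x0 y0 len N [w0] := by
    rw [hE]
    show Lmap x0 y0 len N w0 '' E' ⊆ Lmap x0 y0 len N w0 '' cell x0 y0 len N []
    exact Set.image_mono hE'sq
  -- core pairwise estimate
  have core : ∀ s₁ ∈ E', ∀ s₂ ∈ E', s * (f s₁ - f s₂) ≤ oscil f E + C := by
    intro s₁ hs₁ s₂ hs₂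
    set t₁ := Lmap x0 y0 len N w0 s₁ with ht₁d
    set t₂ := Lmap x0 y0 len N w0 s₂ with ht₂d
    have ht₁ : t₁ ∈ E := ⟨s₁, hs₁, rfl⟩
    have ht₂ : t₂ ∈ E := ⟨s₂, hs₂, rfl⟩
    have hfe₁ : f t₁ = S t₁ * f s₁ + q t₁ := by
      have := hself w0 t₁ (hE1 ht₁)
      rwa [ht₁d, LInv_Lmap] at this
    have hfe₂ : f t₂ = S t₂ * f s₂ + q t₂ := by
      have := hself w0 t₂ (hE1 ht₂)
      rwa [ht₂d, LInv_Lmap] at this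
    rcases le_or_gt (f s₁ - f s₂) 0 with hneg | hpos
    · exact le_trans (mul_nonpos_of_nonneg_of_nonpos hs0 hneg) (by linarith)
    · have hd : eudist t₁ t₂ ≤ Real.sqrt 2 * (len / N ^ (l'.length + 1)) := by
        have := cell_eudist x0 y0 len N hlen.le (w0 :: l') ht₁ ht₂
        simpa using this
      have hd0 : 0 ≤ eudist t₁ t₂ := Real.sqrt_nonneg _
      have h1 : s ≤ |S t₁| := infAbs_le (hEA ht₁)
      have h2 : s * (f s₁ - f s₂) ≤ |S t₁| * (f s₁ - f s₂) := by
        apply mul_le_mul_of_nonneg_right h1 hpos.le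
      have hiden : S t₁ * (f s₁ - f s₂)
          = (f t₁ - f t₂) - (S t₁ - S t₂) * f s₂ - (q t₁ - q t₂) := by
        rw [hfe₁, hfe₂]; ring
      have h3 : |S t₁| * (f s₁ - f s₂) = |S t₁ * (f s₁ - f s₂)| := by
        rw [abs_mul, abs_of_pos hpos]
      have h4 : |S t₁ * (f s₁ - f s₂)| ≤
          |f t₁ - f t₂| + |S t₁ - S t₂| * |f s₂| + |q t₁ - q t₂| := by
        rw [hiden]
        calc |(f t₁ - f t₂) - (S t₁ - S t₂) * f s₂ - (q t₁ - q t₂)|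
            ≤ |(f t₁ - f t₂) - (S t₁ - S t₂) * f s₂| + |q t₁ - q t₂| := abs_sub _ _
          _ ≤ |f t₁ - f t₂| + |(S t₁ - S t₂) * f s₂| + |q t₁ - q t₂| := by
              have := abs_sub (f t₁ - f t₂) ((S t₁ - S t₂) * f s₂)
              linarith
          _ = |f t₁ - f t₂| + |S t₁ - S t₂| * |f s₂| + |q t₁ - q t₂| := by rw [abs_mul]
      have h5 : |f t₁ - f t₂| ≤ oscil f E := abs_sub_le_oscil hcE hfE ht₁ ht₂
      have h6 : |S t₁ - S t₂| ≤ lamS * eudist t₁ t₂ := hSlip t₁ (hEsq ht₁) t₂ (hEsq ht₂)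
      have h7 : |q t₁ - q t₂| ≤ lamq * eudist t₁ t₂ := hqlip t₁ (hEsq ht₁) t₂ (hEsq ht₂)
      have h8 : |f s₂| ≤ M := abs_le_supAbs hcsq hf (hE'sq hs₂)
      have h9 : |S t₁ - S t₂| * |f s₂| ≤ lamS * eudist t₁ t₂ * M :=
        mul_le_mul h6 h8 (abs_nonneg _) (by positivity)
      have h10 : (lamS * M + lamq) * eudist t₁ t₂ ≤ C := by
        rw [hC]
        apply mul_le_mul_of_nonneg_left hd (by positivity)
      nlinarith
  -- conclude
  rcases eq_or_lt_of_le hs0 with hz | hsp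
  · rw [← hz, zero_mul]; linarith
  · have : oscil f E' ≤ (oscil f E + C) / s := by
      apply oscil_le hneE'
      intro a ha b hb
      rw [le_div_iff₀ hsp]
      calc (f a - f b) * s = s * (f a - f b) := mul_comm _ _
        _ ≤ oscil f E + C := core a ha b hb
    calc s * oscil f E' ≤ s * ((oscil f E + C) / s) := by
          apply mul_le_mul_of_nonneg_left this hs0
      _ = oscil f E + C := by field_simp

end Key
section SumDec
variable (x0 y0 len : ℝ) (N : ℕ)

lemma oscSum_succ (φ : ℝ × ℝ → ℝ) (p : List (Fin N × Fin N)) (m : ℕ) :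
    oscSum x0 y0 len N φ p (m + 1)
      = ∑ a : Fin N × Fin N, oscSum x0 y0 len N φ (p ++ [a]) m := by
  unfold oscSum
  rw [← (Fin.consEquiv (fun _ : Fin (m+1) => Fin N × Fin N)).sum_comp
    (fun v => oscil φ (cell x0 y0 len N (p ++ List.ofFn v)))]
  rw [Fintype.sum_prod_type]
  congr 1; ext a; congr 1; ext u
  congr 2
  simp [Fin.consEquiv, List.ofFn_succ, Fin.cons_succ]

end SumDec
/-- recursion inequality (lower) for oscillation sums of the FIF. -/
theorem oscSum_recursion_lower (x0 y0 len : ℝ) (hlen : 0 < len) (N : ℕ) (hN : 2 ≤ N)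
    (f S q : ℝ × ℝ → ℝ) (lamS lamq : ℝ) (hlamS : 0 < lamS) (hlamq : 0 < lamq)
    (hf : ContinuousOn f (sqD x0 y0 len))
    (hSlip : ∀ t₁ ∈ sqD x0 y0 len, ∀ t₂ ∈ sqD x0 y0 len, |S t₁ - S t₂| ≤ lamS * eudist t₁ t₂)
    (hS1 : ∀ t ∈ sqD x0 y0 len, |S t| < 1)
    (hqlip : ∀ t₁ ∈ sqD x0 y0 len, ∀ t₂ ∈ sqD x0 y0 len, |q t₁ - q t₂| ≤ lamq * eudist t₁ t₂)
    (hself : ∀ w : Fin N × Fin N, ∀ t ∈ cell x0 y0 len N [w],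
      f t = S t * f (LInv x0 y0 len N w t) + q t) :
    ∀ (n k : ℕ), 0 < n → 0 < k → ∀ w : Fin n → Fin N × Fin N,
      oscSum x0 y0 len N f (List.ofFn w) k ≥
        (∑ w' : Fin N × Fin N,
          infAbs S (cell x0 y0 len N (List.ofFn w ++ [w'])) *
            oscSum x0 y0 len N f ((List.ofFn w).tail ++ [w']) (k - 1))
        - Real.sqrt 2 * (2 * lamS * supAbs f (sqD x0 y0 len) + lamq) * len *
            (N : ℝ) ^ ((k : ℤ) - (n : ℤ)) := by
  intro n k hn hk w
  obtain ⟨n', rfl⟩ : ∃ n', n = n' + 1 := ⟨n - 1, (Nat.succ_pred_eq_of_pos hn).symm⟩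
  obtain ⟨m, rfl⟩ : ∃ m, k = m + 1 := ⟨k - 1, (Nat.succ_pred_eq_of_pos hk).symm⟩
  have hNpos : (0:ℝ) < N := by positivity
  set M := supAbs f (sqD x0 y0 len) with hM
  have hcsq : IsCompact (sqD x0 y0 len) := isCompact_Icc.prod isCompact_Icc
  have hM0 : 0 ≤ M := supAbs_nonneg hcsq hf (sqD_nonempty x0 y0 len hlen.le)
  set C := (lamS * M + lamq) * (Real.sqrt 2 * (len / N ^ (n' + m + 2))) with hC
  have hC0 : 0 ≤ C := by positivity
  simp only [Nat.add_sub_cancel]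
  rw [ge_iff_le, sub_le_iff_le_add, oscSum_succ]
  -- per-letter estimate
  have perA : ∀ a : Fin N × Fin N,
      infAbs S (cell x0 y0 len N (List.ofFn w ++ [a])) *
          oscSum x0 y0 len N f ((List.ofFn w).tail ++ [a]) m
        ≤ oscSum x0 y0 len N f (List.ofFn w ++ [a]) m
          + (Fintype.card (Fin m → Fin N × Fin N)) * C := by
    intro a
    unfold oscSum
    rw [Finset.mul_sum]
    have step : ∀ u : Fin m → Fin N × Fin N,
        infAbs S (cell x0 y0 len N (List.ofFn w ++ [a])) *
            oscil f (cell x0 y0 len N (((List.ofFn w).tail ++ [a]) ++ List.ofFn u))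
          ≤ oscil f (cell x0 y0 len N ((List.ofFn w ++ [a]) ++ List.ofFn u)) + C := by
      intro u
      have hl1 : (List.ofFn w ++ [a]) ++ List.ofFn u
          = w 0 :: (List.ofFn (fun i : Fin n' => w i.succ) ++ a :: List.ofFn u) := by
        simp [List.ofFn_succ]
      have hl2 : ((List.ofFn w).tail ++ [a]) ++ List.ofFn u
          = List.ofFn (fun i : Fin n' => w i.succ) ++ a :: List.ofFn u := by
        simp [List.ofFn_succ]
      have hlen' : (List.ofFn (fun i : Fin n' => w i.succ) ++ a :: List.ofFn u).length + 1
          = n' + m + 2 := by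
        simp; ring
      have hsub : cell x0 y0 len N
            (w 0 :: (List.ofFn (fun i : Fin n' => w i.succ) ++ a :: List.ofFn u))
          ⊆ cell x0 y0 len N (List.ofFn w ++ [a]) := by
        rw [← hl1]
        exact cell_append_subset x0 y0 len N hlen.le _ _
      have := key_cell x0 y0 len N hlen f S q lamS lamq hlamS.le hlamq.le hf hSlip hqlip
        hself (w 0) (List.ofFn (fun i : Fin n' => w i.succ) ++ a :: List.ofFn u)
        (cell x0 y0 len N (List.ofFn w ++ [a])) hsub
      rw [hlen'] at this
      rw [hl1, hl2]
      exact this.trans (by rw [hC])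
    calc ∑ u : Fin m → Fin N × Fin N, infAbs S (cell x0 y0 len N (List.ofFn w ++ [a])) *
            oscil f (cell x0 y0 len N (((List.ofFn w).tail ++ [a]) ++ List.ofFn u))
        ≤ ∑ u : Fin m → Fin N × Fin N,
            (oscil f (cell x0 y0 len N ((List.ofFn w ++ [a]) ++ List.ofFn u)) + C) :=
          Finset.sum_le_sum fun u _ => step u
      _ = _ := by
          rw [Finset.sum_add_distrib, Finset.sum_const, Finset.card_univ, nsmul_eq_mul]
  -- sum over letters
  have total : (∑ a : Fin N × Fin N,
        infAbs S (cell x0 y0 len N (List.ofFn w ++ [a])) *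
          oscSum x0 y0 len N f ((List.ofFn w).tail ++ [a]) m)
      ≤ (∑ a : Fin N × Fin N, oscSum x0 y0 len N f (List.ofFn w ++ [a]) m)
        + (Fintype.card (Fin N × Fin N)) * ((Fintype.card (Fin m → Fin N × Fin N)) * C) := by
    calc _ ≤ ∑ a : Fin N × Fin N, (oscSum x0 y0 len N f (List.ofFn w ++ [a]) m
            + (Fintype.card (Fin m → Fin N × Fin N)) * C) :=
          Finset.sum_le_sum fun a _ => perA a
      _ = _ := by
          rw [Finset.sum_add_distrib, Finset.sum_const, Finset.card_univ, nsmul_eq_mul]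
  refine total.trans ((add_le_add_iff_left _).2 ?_)
  -- error bound
  have hcard1 : (Fintype.card (Fin N × Fin N) : ℝ) = (N:ℝ)^2 := by
    simp [Fintype.card_prod]; ring
  have hcard2 : (Fintype.card (Fin m → Fin N × Fin N) : ℝ) = (N:ℝ)^(2*m) := by
    simp [Fintype.card_fun, Fintype.card_prod]
    rw [← pow_two, ← pow_mul]
  have hzp : (N:ℝ) ^ (((m+1:ℕ) : ℤ) - ((n'+1:ℕ) : ℤ)) = (N:ℝ)^(2*m+2) / (N:ℝ)^(n'+m+2) := by
    rw [eq_div_iff (by positivity), ← zpow_natCast (N:ℝ) (n'+m+2),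
      ← zpow_add₀ hNpos.ne', ← zpow_natCast (N:ℝ) (2*m+2)]
    congr 1; push_cast; ring
  rw [hcard1, hcard2, hC, hzp]
  have hpow0 : (0:ℝ) < (N:ℝ)^(n'+m+2) := by positivity
  have keyeq : (N:ℝ)^2 * ((N:ℝ)^(2*m) * ((lamS * M + lamq) * (Real.sqrt 2 * (len / (N:ℝ)^(n'+m+2)))))
      = Real.sqrt 2 * (lamS * M + lamq) * len * ((N:ℝ)^(2*m+2) / (N:ℝ)^(n'+m+2)) := by
    field_simp; ring
  rw [keyeq]
  have h2 : (0:ℝ) ≤ Real.sqrt 2 := Real.sqrt_nonneg _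
  have hfac : (0:ℝ) ≤ (N:ℝ)^(2*m+2) / (N:ℝ)^(n'+m+2) := by positivity
  have hco : Real.sqrt 2 * (lamS * M + lamq) ≤ Real.sqrt 2 * (2 * lamS * M + lamq) := by
    apply mul_le_mul_of_nonneg_left _ h2
    nlinarith
  apply mul_le_mul_of_nonneg_right _ hfac
  apply mul_le_mul_of_nonneg_right hco hlen.le
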